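/- A set E of formulas is an extension of (W,D) if and only if E = ⋃_{k≥0} E_k, where E₀ = W and E_{k+1} = Th(E_k) ∪ { γ : (α : β₁,…,βₙ / γ) ∈ D, α ∈ E_k, and ¬βᵢ ∉ E for all i } (Reiter's quasi-iterative characterization is equivalent to the fixed-point definition). -/

import Mathlib

/-- Propositional formulas over natural-number atoms. -/
inductive PForm where
  | atom : ℕ → PForm
  | neg : PForm → PForm
  | conj : PForm → PForm → PForm
  | disj : PForm → PForm → PForm
deriving DecidableEq

/-- Satisfaction of a formula under a valuation. -/
def PForm.sat (v : ℕ → Prop) : PForm → Prop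
  | .atom n => v n
  | .neg f => ¬ f.sat v
  | .conj f g => f.sat v ∧ g.sat v
  | .disj f g => f.sat v ∨ g.sat v

/-- Propositional deductive closure (semantic consequence). -/
def Th (S : Set PForm) : Set PForm :=
  {φ | ∀ v : ℕ → Prop, (∀ ψ ∈ S, ψ.sat v) → φ.sat v}

/-- Propositional entailment `S ⊢ φ`. -/
def Entails (S : Set PForm) (φ : PForm) : Prop := φ ∈ Th S

/-- A default rule (α : β₁,…,βₙ / γ). -/
structure DRule where
  prereq : PForm
  justifs : List PForm
  conseq : PForm

/-- Consequents of a set of defaults. -/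
def Conseq (Δ : Set DRule) : Set PForm := DRule.conseq '' Δ

/-- The defining properties of Γ(S): `T` contains `W`, is deductively closed,
and is closed under defaults applicable w.r.t. `S`. -/
def GammaClosed (W : Set PForm) (D : Set DRule) (S T : Set PForm) : Prop :=
  W ⊆ T ∧ Th T = T ∧
  ∀ δ ∈ D, δ.prereq ∈ T → (∀ β ∈ δ.justifs, PForm.neg β ∉ S) → δ.conseq ∈ T

/-- Γ(S): the smallest set satisfying `GammaClosed`. -/
def Gamma (W : Set PForm) (D : Set DRule) (S : Set PForm) : Set PForm :=
  ⋂₀ {T | GammaClosed W D S T}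

/-- Reiter extension: fixed point of Γ. -/
def IsExtension (W : Set PForm) (D : Set DRule) (E : Set PForm) : Prop :=
  Gamma W D E = E

/-- Generating default set of `E`. -/
def GD (W : Set PForm) (D : Set DRule) (E : Set PForm) : Set DRule :=
  {δ ∈ D | δ.prereq ∈ E ∧ ∀ β ∈ δ.justifs, PForm.neg β ∉ E}

/-- Groundedness of a (finite) set of defaults. -/
def Grounded (W : Set PForm) (Δ : Set DRule) : Prop :=
  ∃ L : List DRule, L.Nodup ∧ {δ | δ ∈ L} = Δ ∧
    ∀ i (h : i < L.length),
      Entails (W ∪ Conseq {δ | δ ∈ L.take i}) (L.get ⟨i, h⟩).prereq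

/-- Reiter's quasi-iterative sequence E₀ = W,
E_{k+1} = Th(E_k) ∪ {γ : (α:β⃗/γ) ∈ D, α ∈ E_k, ∀ i ¬βᵢ ∉ E}. -/
def iterE (W : Set PForm) (D : Set DRule) (E : Set PForm) : ℕ → Set PForm
  | 0 => W
  | k + 1 => Th (iterE W D E k) ∪
      {γ | ∃ δ ∈ D, δ.conseq = γ ∧ δ.prereq ∈ iterE W D E k ∧
        ∀ β ∈ δ.justifs, PForm.neg β ∉ E}


open Classical

/-- finite satisfiability -/
def FinSat (S : Set PForm) : Prop :=
  ∀ L : List PForm, (∀ ψ ∈ L, ψ ∈ S) → ∃ v : ℕ → Prop, ∀ ψ ∈ L, ψ.sat v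

lemma finsat_insert (S : Set PForm) (h : FinSat S) (φ : PForm) :
    FinSat (insert φ S) ∨ FinSat (insert φ.neg S) := by
  by_contra hc
  push_neg at hc
  obtain ⟨h1, h2⟩ := hc
  unfold FinSat at h1 h2
  push_neg at h1 h2
  obtain ⟨L1, hL1, hL1'⟩ := h1
  obtain ⟨L2, hL2, hL2'⟩ := h2
  set L := L1.filter (fun ψ => ψ ≠ φ) ++ L2.filter (fun ψ => ψ ≠ φ.neg) with hL
  obtain ⟨v, hv⟩ := h L (by
    intro ψ hψ
    rcases List.mem_append.1 hψ with hm | hm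
    · have := List.of_mem_filter hm
      have hmem := List.mem_of_mem_filter hm
      rcases hL1 ψ hmem with h' | h'
      · simp at this; exact absurd h' this
      · exact h'
    · have := List.of_mem_filter hm
      have hmem := List.mem_of_mem_filter hm
      rcases hL2 ψ hmem with h' | h'
      · simp at this; exact absurd h' this
      · exact h')
  by_cases hφ : φ.sat v
  · obtain ⟨ψ, hψ, hns⟩ := hL1' v
    by_cases he : ψ = φ
    · exact hns (he ▸ hφ)
    · exact hns (hv ψ (List.mem_append.2 (Or.inl (List.mem_filter.2 ⟨hψ, by simp [he]⟩))))
  · obtain ⟨ψ, hψ, hns⟩ := hL2' v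
    by_cases he : ψ = φ.neg
    · exact hns (by subst he; exact hφ)
    · exact hns (hv ψ (List.mem_append.2 (Or.inr (List.mem_filter.2 ⟨hψ, by simp [he]⟩))))

noncomputable def asn (S : Set PForm) : ℕ → List PForm
  | 0 => []
  | n+1 =>
    if FinSat (insert (PForm.atom n) (S ∪ {ψ | ψ ∈ asn S n}))
    then PForm.atom n :: asn S n
    else PForm.neg (PForm.atom n) :: asn S n

lemma asn_subset (S : Set PForm) (n : ℕ) : asn S n ⊆ asn S (n+1) := by
  intro ψ hψ
  unfold asn
  split <;> exact List.mem_cons_of_mem _ hψ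

lemma asn_mono (S : Set PForm) {n m : ℕ} (h : n ≤ m) : asn S n ⊆ asn S m := by
  induction m with
  | zero => have : n = 0 := by omega
            subst this; exact fun ψ hψ => hψ
  | succ m ih =>
    rcases Nat.lt_or_ge n (m+1) with h' | h'
    · exact fun ψ hψ => asn_subset S m (ih (by omega) hψ)
    · have : n = m + 1 := by omega
      subst this; exact fun ψ hψ => hψ

lemma asn_shape (S : Set PForm) (n : ℕ) :
    ∀ ψ ∈ asn S n, ∃ j < n, ψ = PForm.atom j ∨ ψ = PForm.neg (PForm.atom j) := by
  induction n with
  | zero => intro ψ hψ; simp [asn] at hψ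
  | succ n ih =>
    intro ψ hψ
    unfold asn at hψ
    split at hψ <;> rcases List.mem_cons.1 hψ with h' | h'
    · exact ⟨n, by omega, Or.inl h'⟩
    · obtain ⟨j, hj, hh⟩ := ih ψ h'; exact ⟨j, by omega, hh⟩
    · exact ⟨n, by omega, Or.inr h'⟩
    · obtain ⟨j, hj, hh⟩ := ih ψ h'; exact ⟨j, by omega, hh⟩

lemma asn_total (S : Set PForm) (n : ℕ) :
    PForm.atom n ∈ asn S (n+1) ∨ PForm.neg (PForm.atom n) ∈ asn S (n+1) := by
  unfold asn
  split
  · exact Or.inl (List.mem_cons_self)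
  · exact Or.inr (List.mem_cons_self)

lemma asn_succ (S : Set PForm) (n : ℕ) :
    asn S (n+1) =
      if FinSat (insert (PForm.atom n) (S ∪ {ψ | ψ ∈ asn S n}))
      then PForm.atom n :: asn S n
      else PForm.neg (PForm.atom n) :: asn S n := by
  rfl

lemma asn_finsat (S : Set PForm) (h : FinSat S) (n : ℕ) :
    FinSat (S ∪ {ψ | ψ ∈ asn S n}) := by
  induction n with
  | zero =>
    have : S ∪ {ψ | ψ ∈ asn S 0} = S := by simp [asn]
    rw [this]; exact h
  | succ n ih =>
    by_cases hc : FinSat (insert (PForm.atom n) (S ∪ {ψ | ψ ∈ asn S n}))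
    · have heq : S ∪ {ψ | ψ ∈ asn S (n+1)} =
          insert (PForm.atom n) (S ∪ {ψ | ψ ∈ asn S n}) := by
        rw [asn_succ, if_pos hc]
        ext ψ; simp only [Set.mem_union, Set.mem_setOf_eq, List.mem_cons, Set.mem_insert_iff]
        tauto
      rw [heq]; exact hc
    · have hneg := (finsat_insert _ ih (PForm.atom n)).resolve_left hc
      have heq : S ∪ {ψ | ψ ∈ asn S (n+1)} =
          insert (PForm.neg (PForm.atom n)) (S ∪ {ψ | ψ ∈ asn S n}) := by
        rw [asn_succ, if_neg hc]
        ext ψ; simp only [Set.mem_union, Set.mem_setOf_eq, List.mem_cons, Set.mem_insert_iff]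
        tauto
      rw [heq]; exact hneg

/-- atom bound -/
def PForm.bound : PForm → ℕ
  | .atom n => n+1
  | .neg f => f.bound
  | .conj f g => max f.bound g.bound
  | .disj f g => max f.bound g.bound

lemma sat_ext (φ : PForm) (v w : ℕ → Prop) (h : ∀ i < φ.bound, v i ↔ w i) :
    φ.sat v ↔ φ.sat w := by
  induction φ with
  | atom n => exact h n (by simp [PForm.bound])
  | neg f ih => simp only [PForm.sat]; rw [ih (fun i hi => h i hi)]
  | conj f g ihf ihg =>
    simp only [PForm.sat]
    rw [ihf (fun i hi => h i (lt_of_lt_of_le hi (le_max_left _ _))),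
        ihg (fun i hi => h i (lt_of_lt_of_le hi (le_max_right _ _)))]
  | disj f g ihf ihg =>
    simp only [PForm.sat]
    rw [ihf (fun i hi => h i (lt_of_lt_of_le hi (le_max_left _ _))),
        ihg (fun i hi => h i (lt_of_lt_of_le hi (le_max_right _ _)))]

/-- Compactness: finitely satisfiable implies satisfiable. -/
lemma finsat_sat (S : Set PForm) (h : FinSat S) :
    ∃ v : ℕ → Prop, ∀ φ ∈ S, φ.sat v := by
  refine ⟨fun i => PForm.atom i ∈ asn S (i+1), ?_⟩
  intro φ hφ
  set v : ℕ → Prop := fun i => PForm.atom i ∈ asn S (i+1) with hv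
  set N := φ.bound with hN
  obtain ⟨w, hw⟩ := asn_finsat S h N (φ :: asn S N) (by
    intro ψ hψ
    rcases List.mem_cons.1 hψ with h' | h'
    · exact Or.inl (h' ▸ hφ)
    · exact Or.inr h')
  have hφw : φ.sat w := hw φ (List.mem_cons_self)
  have hagree : ∀ i < N, v i ↔ w i := by
    intro i hi
    have hsub : asn S (i+1) ⊆ asn S N := asn_mono S (by omega)
    rcases asn_total S i with hpos | hneg
    · have : (PForm.atom i).sat w := hw _ (List.mem_cons_of_mem _ (hsub hpos))
      simp only [PForm.sat] at this
      exact ⟨fun _ => this, fun _ => hpos⟩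
    · have hnw : (PForm.neg (PForm.atom i)).sat w :=
        hw _ (List.mem_cons_of_mem _ (hsub hneg))
      simp only [PForm.sat] at hnw
      constructor
      · intro hvi
        exfalso
        -- atom i ∈ asn S (i+1) and neg atom i ∈ asn S (i+1): impossible
        have hi1 : PForm.atom i ∈ asn S (i+1) := hvi
        -- asn S (i+1) is lit :: asn S i
        revert hi1 hneg
        unfold asn
        split
        · intro hneg hi1
          rcases List.mem_cons.1 hneg with h' | h'
          · exact absurd h' (by simp)
          · obtain ⟨j, hj, hh⟩ := asn_shape S i _ h'
            rcases hh with hh | hh <;> simp_all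
        · intro hneg hi1
          rcases List.mem_cons.1 hi1 with h' | h'
          · exact absurd h' (by simp)
          · obtain ⟨j, hj, hh⟩ := asn_shape S i _ h'
            rcases hh with hh | hh <;> simp_all
      · intro hwi; exact absurd hwi hnw
  exact (sat_ext φ v w hagree).2 hφw

lemma subset_Th (S : Set PForm) : S ⊆ Th S :=
  fun φ hφ v hv => hv φ hφ

lemma Th_mono {S T : Set PForm} (h : S ⊆ T) : Th S ⊆ Th T :=
  fun φ hφ v hv => hφ v (fun ψ hψ => hv ψ (h hψ))

lemma Th_idem (S : Set PForm) : Th (Th S) = Th S := by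
  apply Set.Subset.antisymm
  · intro φ hφ v hv
    exact hφ v (fun ψ hψ => hψ v hv)
  · exact subset_Th _

lemma iterE_succ_mono (W : Set PForm) (D : Set DRule) (E : Set PForm) (k : ℕ) :
    iterE W D E k ⊆ iterE W D E (k+1) :=
  fun φ hφ => Or.inl (subset_Th _ hφ)

lemma iterE_mono (W : Set PForm) (D : Set DRule) (E : Set PForm) {k m : ℕ}
    (h : k ≤ m) : iterE W D E k ⊆ iterE W D E m := by
  induction m with
  | zero => have : k = 0 := by omega
            subst this; exact fun _ h => h
  | succ m ih =>
    rcases Nat.lt_or_ge k (m+1) with h' | h'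
    · exact fun φ hφ => iterE_succ_mono W D E m (ih (by omega) hφ)
    · have : k = m + 1 := by omega
      subst this; exact fun _ h => h

lemma list_subset_iterE (W : Set PForm) (D : Set DRule) (E : Set PForm)
    (L : List PForm) (h : ∀ ψ ∈ L, ψ ∈ ⋃ k, iterE W D E k) :
    ∃ k, ∀ ψ ∈ L, ψ ∈ iterE W D E k := by
  induction L with
  | nil => exact ⟨0, by simp⟩
  | cons φ L ih =>
    obtain ⟨k, hk⟩ := ih (fun ψ hψ => h ψ (List.mem_cons_of_mem _ hψ))
    obtain ⟨k', hk'⟩ := Set.mem_iUnion.1 (h φ (List.mem_cons_self))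
    refine ⟨max k k', ?_⟩
    intro ψ hψ
    rcases List.mem_cons.1 hψ with h' | h'
    · subst h'; exact iterE_mono W D E (le_max_right _ _) hk'
    · exact iterE_mono W D E (le_max_left _ _) (hk ψ h')

lemma Th_iUnion_chain (W : Set PForm) (D : Set DRule) (E : Set PForm) (φ : PForm)
    (h : φ ∈ Th (⋃ k, iterE W D E k)) : ∃ k, φ ∈ Th (iterE W D E k) := by
  by_contra hc
  push_neg at hc
  have hfs : FinSat (insert φ.neg (⋃ k, iterE W D E k)) := by
    intro L hL
    obtain ⟨k, hk⟩ := list_subset_iterE W D E (L.filter (fun ψ => ψ ≠ φ.neg)) (by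
      intro ψ hψ
      have h1 := List.of_mem_filter hψ
      have h2 := List.mem_of_mem_filter hψ
      rcases hL ψ h2 with h' | h'
      · simp at h1; exact absurd h' h1
      · exact h')
    have : φ ∉ Th (iterE W D E k) := hc k
    unfold Th at this
    simp only [Set.mem_setOf_eq] at this
    push_neg at this
    obtain ⟨v, hv, hnφ⟩ := this
    refine ⟨v, ?_⟩
    intro ψ hψ
    by_cases he : ψ = φ.neg
    · subst he; exact hnφ
    · exact hv ψ (hk ψ (List.mem_filter.2 ⟨hψ, by simp [he]⟩))
  obtain ⟨v, hv⟩ := finsat_sat _ hfs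
  have hnφ : (PForm.neg φ).sat v := hv _ (Set.mem_insert _ _)
  exact hnφ (h v (fun ψ hψ => hv ψ (Set.mem_insert_of_mem _ hψ)))

lemma Th_U (W : Set PForm) (D : Set DRule) (E : Set PForm) :
    Th (⋃ k, iterE W D E k) = ⋃ k, iterE W D E k := by
  apply Set.Subset.antisymm
  · intro φ hφ
    obtain ⟨k, hk⟩ := Th_iUnion_chain W D E φ hφ
    exact Set.mem_iUnion.2 ⟨k+1, Or.inl hk⟩
  · exact subset_Th _

lemma gammaClosed_U (W : Set PForm) (D : Set DRule) (E : Set PForm) :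
    GammaClosed W D E (⋃ k, iterE W D E k) := by
  refine ⟨fun φ hφ => Set.mem_iUnion.2 ⟨0, hφ⟩, Th_U W D E, ?_⟩
  intro δ hδ hpre hjust
  obtain ⟨k, hk⟩ := Set.mem_iUnion.1 hpre
  exact Set.mem_iUnion.2 ⟨k+1, Or.inr ⟨δ, hδ, rfl, hk, hjust⟩⟩

lemma iterE_subset_closed (W : Set PForm) (D : Set DRule) (E T : Set PForm)
    (hT : GammaClosed W D E T) (k : ℕ) : iterE W D E k ⊆ T := by
  obtain ⟨hW, hTh, hD⟩ := hT
  induction k with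
  | zero => exact hW
  | succ k ih =>
    intro φ hφ
    rcases hφ with hφ | hφ
    · exact hTh ▸ Th_mono ih hφ
    · obtain ⟨δ, hδ, hconseq, hpre, hjust⟩ := hφ
      exact hconseq ▸ hD δ hδ (ih hpre) hjust

lemma gamma_eq_U (W : Set PForm) (D : Set DRule) (E : Set PForm) :
    Gamma W D E = ⋃ k, iterE W D E k := by
  apply Set.Subset.antisymm
  · exact Set.sInter_subset_of_mem (gammaClosed_U W D E)
  · intro φ hφ
    obtain ⟨k, hk⟩ := Set.mem_iUnion.1 hφ
    intro T hT
    exact iterE_subset_closed W D E T hT k hk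


theorem extension_iff_quasi_iterative
    (W : Set PForm) (D : Set DRule) (E : Set PForm) :
    IsExtension W D E ↔ E = ⋃ k, iterE W D E k := by
  rw [IsExtension, gamma_eq_U, eq_comm]
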